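/- Fix ν > 0 and τ = 1, and define c_E(N) = g(N) + g(N + ν) − g(d_0(1, N, ν)) − g(d_1(1, N, ν)) for N > 0. Then lim_{N→0⁺} c_E(N)/(N·log(1/N)) = 1/(1 + ν). That is, in the low-photon-number regime the entanglement-assisted capacity per pulse is asymptotically N·log(1/N)/(1 + ν). -/

import Mathlib

/-- g(x) = (x+1)·log(x+1) − x·log x (with the Mathlib convention log 0 = 0,
so g(0) = 0), the Holevo capacity per pulse. -/
noncomputable def g (x : ℝ) : ℝ := (x + 1) * Real.log (x + 1) - x * Real.log x

/-- d(τ, n, ν) = √(((1+τ)n + ν + 1)² − 4τn(n+1)). -/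
noncomputable def dFun (τ n ν : ℝ) : ℝ :=
  Real.sqrt (((1 + τ) * n + ν + 1) ^ 2 - 4 * τ * n * (n + 1))

/-- d_x(τ, n, ν) = (d(τ, n, ν) − 1 + (−1)^x((τ−1)n + ν))/2 for x ∈ {0,1}. -/
noncomputable def dx (x : ℕ) (τ n ν : ℝ) : ℝ :=
  (dFun τ n ν - 1 + (-1 : ℝ) ^ x * ((τ - 1) * n + ν)) / 2

/-- Shannon capacity C_S(b, τ, n, ν) = b·log(1 + τn/(b + ν)). -/
noncomputable def C_S (b τ n ν : ℝ) : ℝ := b * Real.log (1 + τ * n / (b + ν))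

/-- Holevo (joint-detection) capacity C_J(b, τ, n, ν) = b·(g((n+ν)/b) − g(ν/b)). -/
noncomputable def C_J (b τ n ν : ℝ) : ℝ := b * (g ((n + ν) / b) - g (ν / b))

/-- Entanglement-assisted capacity
C_E(b, τ, n, ν) = b·∑_{x=0,1} (g((τn + x·ν)/b) − g(d_x(τ, n/b, ν/b))). -/
noncomputable def C_E (b τ n ν : ℝ) : ℝ :=
  b * ((g ((τ * n + 0 * ν) / b) - g (dx 0 τ (n / b) (ν / b))) +
       (g ((τ * n + 1 * ν) / b) - g (dx 1 τ (n / b) (ν / b))))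


/-!
Near `0`, `g x = x log (1/x) + O(x)`, so `g` of anything comparable to `c N` is
`~ c N log (1/N)`. At `τ = 1` one has `d₁ ~ ν N/(1+ν)` and `d₀ = ν + d₁`, so
`g N - g d₁ ~ (1 - ν/(1+ν)) N log (1/N)`, while `g (N+ν) - g d₀` is `O(N)` because `g` is
differentiable at `ν > 0`.
-/

open Filter Real Topology Asymptotics

lemma g_eq_add_mul_log_one_div (x : ℝ) : g x = (x + 1) * log (x + 1) + x * log (1 / x) := by
  rw [g, one_div, log_inv]; ring

lemma differentiableAt_g {x : ℝ} (h₀ : x ≠ 0) (h₁ : x + 1 ≠ 0) : DifferentiableAt ℝ g x := by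
  unfold g; fun_prop (disch := assumption)

lemma isLittleO_one_log_one_div : (fun _ : ℝ => (1 : ℝ)) =o[𝓝[>] 0] fun x => log (1 / x) := by
  refine (isLittleO_one_left_iff ℝ).2 (tendsto_abs_atTop_atTop.comp ?_)
  simpa only [one_div, log_inv, Function.comp_def] using
    tendsto_neg_atBot_atTop.comp tendsto_log_nhdsGT_zero

lemma isLittleO_id_mul_log_one_div : (fun x : ℝ => x) =o[𝓝[>] 0] fun x => x * log (1 / x) := by
  simpa using (isBigO_refl (fun x : ℝ => x) _).mul_isLittleO isLittleO_one_log_one_div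

lemma isEquivalent_g_nhdsGT_zero : g ~[𝓝[>] 0] fun x => x * log (1 / x) := by
  have hO : (fun x : ℝ => (x + 1) * log (x + 1)) =O[𝓝 0] fun x => x := by
    simpa using
      ((hasDerivAt_mul_log (x := 0 + 1) (by norm_num)).comp_add_const (0 : ℝ) 1).isBigO_sub
  refine IsLittleO.congr_left ?_ fun x => (sub_eq_of_eq_add (g_eq_add_mul_log_one_div x)).symm
  exact (hO.mono nhdsWithin_le_nhds).trans_isLittleO isLittleO_id_mul_log_one_div

section Composition

variable {f : ℝ → ℝ} {c : ℝ}

lemma isEquivalent_log_one_div_comp (hc : 0 < c) (hf_pos : ∀ᶠ x in 𝓝[>] 0, 0 < f x)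
    (hf : Tendsto (fun x => f x / x) (𝓝[>] 0) (𝓝 c)) :
    (fun x => log (1 / f x)) ~[𝓝[>] 0] fun x => log (1 / x) := by
  have hdiff : (fun x => -log (f x / x)) =ᶠ[𝓝[>] 0] fun x => log (1 / f x) - log (1 / x) := by
    filter_upwards [hf_pos, self_mem_nhdsWithin] with x hfx (hx : 0 < x)
    rw [log_div hfx.ne' hx.ne', one_div, one_div, log_inv, log_inv]; ring
  have hbdd : (fun x => -log (f x / x)) =O[𝓝[>] 0] fun _ => (1 : ℝ) :=
    ((continuousAt_log hc.ne').tendsto.comp hf).neg.isBigO_one ℝ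
  exact (hbdd.congr' hdiff EventuallyEq.rfl).trans_isLittleO isLittleO_one_log_one_div

lemma tendsto_g_comp_div_mul_log_one_div (hc : 0 < c) (hf_pos : ∀ᶠ x in 𝓝[>] 0, 0 < f x)
    (hf : Tendsto (fun x => f x / x) (𝓝[>] 0) (𝓝 c)) :
    Tendsto (fun x => g (f x) / (x * log (1 / x))) (𝓝[>] 0) (𝓝 c) := by
  have hf_lin : f ~[𝓝[>] 0] fun x => c * x := by
    refine isEquivalent_of_tendsto_one ?_
    refine (div_self hc.ne' ▸ hf.div_const c).congr' ?_
    filter_upwards [self_mem_nhdsWithin] with x (hx : 0 < x)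
    rw [Pi.div_apply, div_div, mul_comm x c]
  have hf_zero : Tendsto f (𝓝[>] 0) (𝓝[>] 0) := by
    refine tendsto_nhdsWithin_iff.2 ⟨hf_lin.symm.tendsto_nhds ?_, hf_pos⟩
    exact tendsto_nhdsWithin_of_tendsto_nhds
      ((continuous_const_mul c).tendsto' 0 0 (mul_zero c))
  have hg_comp : (fun x => g (f x)) ~[𝓝[>] 0] fun x => c * (x * log (1 / x)) :=
    (isEquivalent_g_nhdsGT_zero.comp_tendsto hf_zero).trans <|
      (hf_lin.mul (isEquivalent_log_one_div_comp hc hf_pos hf)).congr_right <|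
        .of_forall fun x => by simp only [Pi.mul_apply]; ring
  refine (hg_comp.div .refl).symm.tendsto_nhds (tendsto_const_nhds.congr' ?_)
  filter_upwards [Ioo_mem_nhdsGT one_pos] with x hx
  have : x * log (1 / x) ≠ 0 :=
    mul_ne_zero hx.1.ne' (log_pos (one_lt_one_div hx.1 hx.2)).ne'
  rw [Pi.div_apply, mul_div_assoc, div_self this, mul_one]

lemma isLittleO_g_add_sub_g {x : ℝ} (hx : 0 < x) (hf : f =O[𝓝[>] 0] fun y => y) :
    (fun y => g (x + f y) - g x) =o[𝓝[>] 0] fun y => y * log (1 / y) := by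
  have hf_zero : Tendsto f (𝓝[>] 0) (𝓝 0) :=
    hf.trans_tendsto (tendsto_id.mono_left nhdsWithin_le_nhds)
  have hxf : Tendsto (fun y => x + f y) (𝓝[>] 0) (𝓝 x) := by
    simpa using tendsto_const_nhds.add hf_zero
  have hg_lip := (differentiableAt_g hx.ne' (by linarith)).isBigO_sub.comp_tendsto hxf
  refine (hg_lip.trans ?_).trans_isLittleO isLittleO_id_mul_log_one_div
  simpa [Function.comp_def] using hf

end Composition

lemma dFun_one (n ν : ℝ) : dFun 1 n ν = √((ν + 1) ^ 2 + 4 * n * ν) := by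
  rw [dFun]; ring_nf

lemma dx_zero_one (n ν : ℝ) : dx 0 1 n ν = ν + dx 1 1 n ν := by
  simp only [dx]; ring

lemma dx_one_one_eq_div {n ν : ℝ} (hn : 0 ≤ n) (hν : 0 ≤ ν) :
    dx 1 1 n ν = 2 * ν * n / (√((ν + 1) ^ 2 + 4 * n * ν) + (1 + ν)) := by
  have hs := sq_sqrt (show 0 ≤ (ν + 1) ^ 2 + 4 * n * ν by positivity)
  rw [dx, dFun_one, eq_div_iff (by positivity)]
  linear_combination hs / 2

lemma tendsto_dx_one_one_div {ν : ℝ} (hν : 0 ≤ ν) :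
    Tendsto (fun n => dx 1 1 n ν / n) (𝓝[>] 0) (𝓝 (ν / (1 + ν))) := by
  have hcont : ContinuousAt (fun n => 2 * ν / (√((ν + 1) ^ 2 + 4 * n * ν) + (1 + ν))) 0 := by
    fun_prop (disch := positivity)
  have h0 : 2 * ν / (√((ν + 1) ^ 2 + 4 * 0 * ν) + (1 + ν)) = ν / (1 + ν) := by
    rw [mul_zero, zero_mul, add_zero, sqrt_sq (by positivity)]
    field_simp; ring
  refine (h0 ▸ hcont.tendsto.mono_left nhdsWithin_le_nhds).congr' ?_
  filter_upwards [self_mem_nhdsWithin] with n (hn : 0 < n)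
  rw [dx_one_one_eq_div hn.le hν]
  field_simp

/-- STATEMENT 13: for fixed ν > 0 and τ = 1, the per-pulse entanglement-assisted
capacity c_E(N) = g(N) + g(N+ν) − g(d_0(1,N,ν)) − g(d_1(1,N,ν)) satisfies
lim_{N→0⁺} c_E(N)/(N·log(1/N)) = 1/(1+ν). -/
theorem ea_low_photon_asymptotics (ν : ℝ) (hν : 0 < ν) :
    Filter.Tendsto
      (fun N : ℝ =>
        (g N + g (N + ν) - g (dx 0 1 N ν) - g (dx 1 1 N ν)) / (N * Real.log (1 / N)))
      (nhdsWithin 0 (Set.Ioi 0)) (nhds (1 / (1 + ν))) := by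
  have hN : Tendsto (fun N : ℝ => N / N) (𝓝[>] 0) (𝓝 1) :=
    tendsto_const_nhds.congr' <| eventually_mem_nhdsWithin.mono fun N hN => (div_self hN.ne').symm
  have hd : Tendsto (fun N => dx 1 1 N ν / N) (𝓝[>] 0) (𝓝 (ν / (1 + ν))) :=
    tendsto_dx_one_one_div hν.le
  have hd_pos : ∀ᶠ N in 𝓝[>] 0, 0 < dx 1 1 N ν :=
    eventually_mem_nhdsWithin.mono fun N (hN : 0 < N) => by
      rw [dx_one_one_eq_div hN.le hν.le]; positivity
  have hd_lin : (fun N => dx 1 1 N ν) =O[𝓝[>] 0] fun N => N :=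
    isBigO_of_div_tendsto_nhds (eventually_mem_nhdsWithin.mono fun N hN h => absurd h hN.ne') _ hd
  have hmain := (tendsto_g_comp_div_mul_log_one_div one_pos eventually_mem_nhdsWithin hN).sub
    (tendsto_g_comp_div_mul_log_one_div (by positivity) hd_pos hd)
  have hrest := ((isLittleO_g_add_sub_g hν (isBigO_refl _ _)).sub
    (isLittleO_g_add_sub_g hν hd_lin)).tendsto_div_nhds_zero
  convert hmain.add hrest using 2 with N
  · rw [dx_zero_one, add_comm N ν]; ring
  · field_simp; ring
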